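/- arXiv:1101.5619 — 3 statements merged into one kernel-verified Lean document; each statement's English description precedes it below -/
import Mathlib

section
/- If n ≥ 1 and 𝓗 is a hierarchy on [n] = {1, …, n}, then 𝓗 = {(i ∧ j) : i, j ∈ [n]} ∪ Ξ([n]), where (i ∧ j) denotes the MRCA of i and j in 𝓗 and Ξ([n]) is the trivial hierarchy on [n]. -/
/-- A hierarchy on the finite set `S` (here `S` is all of the finite type `α`): a collection
of subsets in which any two members are nested or disjoint, containing the whole set, all
singletons, and the empty set. -/
def IsHierarchy {α : Type*} (H : Set (Set α)) : Prop :=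
  (∀ A ∈ H, ∀ B ∈ H, A ∩ B = A ∨ A ∩ B = B ∨ A ∩ B = ∅) ∧
    Set.univ ∈ H ∧ (∀ s : α, {s} ∈ H) ∧ ∅ ∈ H

/-- The most recent common ancestor of `i` and `j` in `H`: the intersection of all members of
`H` containing both `i` and `j`. -/
def mrca {α : Type*} (H : Set (Set α)) (i j : α) : Set α :=
  ⋂₀ {G | G ∈ H ∧ i ∈ G ∧ j ∈ G}

lemma mrca_mem {α : Type*} [Finite α] (H : Set (Set α)) (hH : IsHierarchy H) (i j : α) :
    mrca H i j ∈ H := by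
  obtain ⟨hnest, huniv, hsingle, hempty⟩ := hH
  set F : Set (Set α) := {G | G ∈ H ∧ i ∈ G ∧ j ∈ G} with hF
  have hFne : F.Nonempty := ⟨Set.univ, huniv, trivial, trivial⟩
  obtain ⟨M, hM, hmin⟩ : ∃ M ∈ F, ∀ G ∈ F, id G ≤ id M → id M = id G := by
    obtain ⟨M, hM⟩ := (Set.toFinite F).exists_minimal hFne
    exact ⟨M, hM.1, fun G hG h => le_antisymm (hM.2 hG h) h⟩
  have hMle : ∀ G ∈ F, M ⊆ G := by
    intro G hG
    rcases hnest M hM.1 G hG.1 with h | h | h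
    · intro x hx; rw [← h] at hx; exact hx.2
    · have hGM : G ⊆ M := by intro y hy; rw [← h] at hy; exact hy.1
      have := hmin G hG hGM
      simp only [id] at this
      rw [this]
    · exfalso
      have : i ∈ M ∩ G := ⟨hM.2.1, hG.2.1⟩
      rw [h] at this; exact this
  have : mrca H i j = M :=
    Set.Subset.antisymm (Set.sInter_subset_of_mem hM) (Set.subset_sInter hMle)
  rw [this]; exact hM.1

/-- a hierarchy on `[n]` (`n ≥ 1`) consists exactly of the MRCAs together with
the trivial hierarchy `Ξ([n]) = {[n]} ∪ {{s} : s ∈ [n]} ∪ {∅}`. -/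
theorem hierarchy_eq_mrcas_union_trivial (n : ℕ) (hn : 1 ≤ n) (H : Set (Set (Fin n)))
    (hH : IsHierarchy H) :
    H = {B | ∃ i j : Fin n, B = mrca H i j} ∪
      ({Set.univ, ∅} ∪ {B | ∃ s : Fin n, B = {s}}) := by
  obtain ⟨hnest, huniv, hsingle, hempty⟩ := hH
  ext A
  constructor
  · intro hA
    rcases A.eq_empty_or_nonempty with hAe | ⟨i, hi⟩
    · exact Or.inr (Or.inl (Or.inr hAe))
    by_cases hsub : A ⊆ {i}
    · exact Or.inr (Or.inr ⟨i, Set.Subset.antisymm hsub (Set.singleton_subset_iff.2 hi)⟩)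
    obtain ⟨j0, hj0A, hj0i⟩ : ∃ j ∈ A, j ∉ ({i} : Set (Fin n)) := by
      by_contra h
      push_neg at h
      exact hsub h
    set P : Set (Set (Fin n)) := {G | G ∈ H ∧ i ∈ G ∧ G ⊂ A} with hP
    have hPne : P.Nonempty := by
      refine ⟨{i}, hsingle i, rfl, ?_⟩
      exact (Set.ssubset_iff_of_subset (Set.singleton_subset_iff.2 hi)).2 ⟨j0, hj0A, hj0i⟩
    obtain ⟨M, hM, hmax⟩ : ∃ M ∈ P, ∀ G ∈ P, id M ≤ id G → id M = id G := by
      obtain ⟨M, hM⟩ := (Set.toFinite P).exists_maximal hPne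
      exact ⟨M, hM.1, fun G hG h => le_antisymm h (hM.2 hG h)⟩
    obtain ⟨j, hjA, hjM⟩ : ∃ x ∈ A, x ∉ M := Set.exists_of_ssubset hM.2.2
    have hiA : i ∈ A := hM.2.2.1 hM.2.1
    left
    refine ⟨i, j, ?_⟩
    apply Set.Subset.antisymm
    · intro x hx
      apply Set.mem_sInter.2
      rintro G ⟨hGH, hiG, hjG⟩
      rcases hnest A hA G hGH with h | h | h
      · have hAG : A ⊆ G := by intro y hy; rw [← h] at hy; exact hy.2
        exact hAG hx
      · have hGA : G ⊆ A := by intro y hy; rw [← h] at hy; exact hy.1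
        rcases eq_or_ne G A with heq | hne
        · exact heq ▸ hx
        exfalso
        have hGP : G ∈ P := ⟨hGH, hiG, hGA.ssubset_of_ne hne⟩
        rcases hnest G hGH M hM.1 with h2 | h2 | h2
        · have hGM : G ⊆ M := by intro y hy; rw [← h2] at hy; exact hy.2
          exact hjM (hGM hjG)
        · have hMG : M ⊆ G := by intro y hy; rw [← h2] at hy; exact hy.1
          have := hmax G hGP hMG
          simp only [id] at this
          rw [← this] at hjG
          exact hjM hjG
        · have : i ∈ G ∩ M := ⟨hiG, hM.2.1⟩
          rw [h2] at this; exact this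
      · exfalso
        have : i ∈ A ∩ G := ⟨hiA, hiG⟩
        rw [h] at this; exact this
    · exact Set.sInter_subset_of_mem ⟨hA, hiA, hjA⟩
  · rintro (⟨i, j, rfl⟩ | ((rfl | rfl) | ⟨s, rfl⟩))
    · exact mrca_mem H ⟨hnest, huniv, hsingle, hempty⟩ i j
    · exact huniv
    · exact hempty
    · exact hsingle s
end

section
/- Let 𝓗 be a hierarchy on a finite set S, let B ∈ 𝓗, and suppose i ∈ B. Then there exists j ∈ B such that B = (i ∧ j), where (i ∧ j) denotes the MRCA of i and j in 𝓗. -/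
/-- if `B` is a member of a hierarchy on a finite set and `i ∈ B`, then
`B = (i ∧ j)` for some `j ∈ B`. -/
theorem mem_hierarchy_eq_mrca {α : Type*} [Fintype α] (H : Set (Set α)) (hH : IsHierarchy H)
    (B : Set α) (hB : B ∈ H) (i : α) (hi : i ∈ B) :
    ∃ j ∈ B, B = mrca H i j := by
  classical
  obtain ⟨hnest, -, -, -⟩ := hH
  set F : Set (Set α) := {G | G ∈ H ∧ i ∈ G ∧ G ⊂ B} with hF
  by_cases hFne : F.Nonempty
  · obtain ⟨M, hM, hMmax⟩ : ∃ M ∈ F, ∀ G ∈ F, M ⊆ G → M = G := by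
      obtain ⟨M, hM, hMmax⟩ := (Set.toFinite F).exists_maximalFor id F hFne
      exact ⟨M, hM, fun G hG hMG => Set.Subset.antisymm hMG (hMmax hG hMG)⟩
    obtain ⟨hMH, hiM, hMB⟩ := hM
    obtain ⟨j, hjB, hjM⟩ := Set.exists_of_ssubset hMB
    refine ⟨j, hjB, Set.Subset.antisymm ?_ (Set.sInter_subset_of_mem ⟨hB, hi, hjB⟩)⟩
    intro x hx G hG
    obtain ⟨hGH, hiG, hjG⟩ := hG
    rcases hnest G hGH B hB with h | h | h
    · -- G ∩ B = G, i.e. G ⊆ B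
      have hGB : G ⊆ B := by rw [← h]; exact Set.inter_subset_right
      rcases eq_or_ne G B with rfl | hne
      · exact hx
      · exfalso
        have hGF : G ∈ F := ⟨hGH, hiG, hGB.ssubset_of_ne hne⟩
        rcases hnest M hMH G hGH with h2 | h2 | h2
        · -- M ⊆ G
          have hMG : M ⊆ G := h2 ▸ Set.inter_subset_right
          have heq : M = G := hMmax G hGF hMG
          exact hjM (heq ▸ hjG)
        · -- G ⊆ M
          have : G ⊆ M := by rw [← h2]; exact Set.inter_subset_left
          exact hjM (this hjG)
        · exact absurd h2 (Set.nonempty_iff_ne_empty.mp ⟨i, hiM, hiG⟩)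
    · have : B ⊆ G := by rw [← h]; exact Set.inter_subset_left
      exact this hx
    · exact absurd h (Set.nonempty_iff_ne_empty.mp ⟨i, hiG, hi⟩)
  · refine ⟨i, hi, Set.Subset.antisymm ?_ (Set.sInter_subset_of_mem ⟨hB, hi, hi⟩)⟩
    intro x hx G hG
    obtain ⟨hGH, hiG, -⟩ := hG
    rcases hnest G hGH B hB with h | h | h
    · have hGB : G ⊆ B := by rw [← h]; exact Set.inter_subset_right
      rcases eq_or_ne G B with rfl | hne
      · exact hx
      · exact absurd ⟨hGH, hiG, hGB.ssubset_of_ne hne⟩ (fun hGF => hFne ⟨G, hGF⟩)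
    · have : B ⊆ G := by rw [← h]; exact Set.inter_subset_left
      exact this hx
    · exact absurd h (Set.nonempty_iff_ne_empty.mp ⟨i, hiG, hi⟩)
end

section
/- Let t ∈ ℓ¹ and let y ∈ [[0,t]]_sp. Then [[0,y]]_sp ⊆ [[0,t]]_sp. Consequently, the relation 'x ∈ [[0,y]]_sp' is transitive: if x ∈ [[0,y]]_sp and y ∈ [[0,t]]_sp then x ∈ [[0,t]]_sp. -/
/-- `ℓ¹`, the Banach space of absolutely summable real sequences. -/
noncomputable abbrev Ell1 : Type := lp (fun _ : ℕ => ℝ) 1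

/-- Coordinate truncation keeping the first `m` coordinates. -/
noncomputable def trunc (m : ℕ) (x : Ell1) : Ell1 :=
  ⟨fun i => if i < m then x i else 0, by
    refine Memℓp.of_exponent_ge (memℓp_zero ?_) (zero_le)
    refine Set.Finite.subset (Set.finite_Iio m) ?_
    intro i hi
    simp only [Set.mem_setOf_eq] at hi
    by_contra h
    simp only [Set.mem_Iio, not_lt] at h
    exact hi (if_neg (not_lt.mpr h))⟩

/-- The open stick-breaking path `[[0,x]]°_sp`. -/
def stickCore (x : Ell1) : Set Ell1 :=
  ⋃ m : ℕ, {y | ∃ s ∈ Set.Icc (0 : ℝ) 1, y = (1 - s) • trunc m x + s • trunc (m + 1) x}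

/-- The stick-breaking path `[[0,x]]_sp`, the closure of `[[0,x]]°_sp` in `ℓ¹`. -/
noncomputable def stickPath (x : Ell1) : Set Ell1 :=
  closure (stickCore x)

lemma trunc_apply (m : ℕ) (x : Ell1) (i : ℕ) :
    (trunc m x) i = if i < m then x i else 0 := rfl

lemma trunc_add (m : ℕ) (x z : Ell1) : trunc m (x + z) = trunc m x + trunc m z := by
  apply lp.ext
  funext i
  simp only [trunc_apply, lp.coeFn_add, Pi.add_apply]
  split_ifs <;> simp

lemma trunc_smul (m : ℕ) (c : ℝ) (x : Ell1) : trunc m (c • x) = c • trunc m x := by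
  apply lp.ext
  funext i
  simp only [trunc_apply, lp.coeFn_smul, Pi.smul_apply, smul_eq_mul]
  split_ifs <;> simp

lemma trunc_trunc_le (k m : ℕ) (h : k ≤ m) (x : Ell1) : trunc k (trunc m x) = trunc k x := by
  apply lp.ext
  funext i
  simp only [trunc_apply]
  split_ifs with h1 h2 <;> try rfl
  exact absurd (lt_of_lt_of_le h1 h) h2

lemma trunc_trunc_ge (k m : ℕ) (h : m ≤ k) (x : Ell1) : trunc k (trunc m x) = trunc m x := by
  apply lp.ext
  funext i
  simp only [trunc_apply]
  split_ifs with h1 h2 <;> try rfl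
  · exact absurd (lt_of_lt_of_le ‹i < m› h) h1

lemma trunc_sub (m : ℕ) (x z : Ell1) : trunc m (x - z) = trunc m x - trunc m z := by
  rw [sub_eq_add_neg, ← neg_one_smul ℝ z, trunc_add, trunc_smul, neg_one_smul,
    ← sub_eq_add_neg]

lemma norm_trunc_le (m : ℕ) (w : Ell1) : ‖trunc m w‖ ≤ ‖w‖ := by
  have h1 : (0 : ℝ) < (1 : ENNReal).toReal := by norm_num
  refine lp.norm_le_of_tsum_le h1 (norm_nonneg w) ?_
  have hw : ‖w‖ ^ (1 : ENNReal).toReal = ∑' i, ‖w i‖ ^ (1 : ENNReal).toReal :=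
    lp.norm_rpow_eq_tsum h1 w
  rw [hw]
  have hsum : Summable (fun i => ‖w i‖ ^ (1 : ENNReal).toReal) := (lp.memℓp w).summable h1
  refine Summable.tsum_le_tsum (fun i => ?_) ?_ hsum
  · simp only [ENNReal.toReal_one, Real.rpow_one, trunc_apply]
    split_ifs <;> simp
  · refine hsum.of_nonneg_of_le (fun i => Real.rpow_nonneg (norm_nonneg _) _) (fun i => ?_)
    gcongr
    simp only [trunc_apply]
    split_ifs <;> simp

lemma continuous_trunc (m : ℕ) : Continuous (trunc m) := by
  refine (LipschitzWith.of_dist_le_mul (K := 1) fun x z => ?_).continuous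
  rw [dist_eq_norm, dist_eq_norm, ← trunc_sub, NNReal.coe_one, one_mul]
  exact norm_trunc_le m _

lemma mem_stickCore_iff {x z : Ell1} :
    z ∈ stickCore x ↔ ∃ m, ∃ s ∈ Set.Icc (0 : ℝ) 1,
      z = (1 - s) • trunc m x + s • trunc (m + 1) x := by
  simp [stickCore]

lemma trunc_seg_le (t : Ell1) {k m : ℕ} (s : ℝ) (h : k ≤ m) :
    trunc k ((1 - s) • trunc m t + s • trunc (m + 1) t) = trunc k t := by
  rw [trunc_add, trunc_smul, trunc_smul, trunc_trunc_le k m h,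
    trunc_trunc_le k (m + 1) (h.trans (Nat.le_succ m))]
  module

lemma trunc_seg_ge (t : Ell1) {k m : ℕ} (s : ℝ) (h : m + 1 ≤ k) :
    trunc k ((1 - s) • trunc m t + s • trunc (m + 1) t)
      = (1 - s) • trunc m t + s • trunc (m + 1) t := by
  rw [trunc_add, trunc_smul, trunc_smul, trunc_trunc_ge k m ((Nat.le_succ m).trans h),
    trunc_trunc_ge k (m + 1) h]

lemma core_mono {t y : Ell1} (hy : y ∈ stickCore t) : stickCore y ⊆ stickCore t := by
  rw [mem_stickCore_iff] at hy
  obtain ⟨m, s, hs, rfl⟩ := hy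
  intro z hz
  rw [mem_stickCore_iff] at hz ⊢
  obtain ⟨k, u, hu, rfl⟩ := hz
  rcases lt_trichotomy k m with hk | heq | hk
  · refine ⟨k, u, hu, ?_⟩
    rw [trunc_seg_le t s hk.le, trunc_seg_le t s hk]
  · subst heq
    refine ⟨k, u * s, ⟨mul_nonneg hu.1 hs.1, ?_⟩, ?_⟩
    · nlinarith [hu.2, hs.2, hu.1, hs.1]
    · rw [trunc_seg_le t s le_rfl, trunc_seg_ge t s le_rfl]
      module
  · refine ⟨m, s, hs, ?_⟩
    rw [trunc_seg_ge t s hk, trunc_seg_ge t s (Nat.le_succ_of_le hk)]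
    module


/-- if `y ∈ [[0,t]]_sp` then `[[0,y]]_sp ⊆ [[0,t]]_sp`; consequently the
relation `x ∈ [[0,y]]_sp` is transitive. -/
theorem stickPath_subset_of_mem (t y : Ell1) (hy : y ∈ stickPath t) :
    stickPath y ⊆ stickPath t ∧ ∀ x : Ell1, x ∈ stickPath y → x ∈ stickPath t := by
  have key : stickCore y ⊆ stickPath t := by
    intro z hz
    rw [mem_stickCore_iff] at hz
    obtain ⟨k, u, hu, rfl⟩ := hz
    have hF : Continuous (fun v : Ell1 => (1 - u) • trunc k v + u • trunc (k + 1) v) :=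
      ((continuous_trunc k).const_smul (1 - u)).add
        ((continuous_trunc (k + 1)).const_smul u)
    have hmaps : Set.MapsTo (fun v : Ell1 => (1 - u) • trunc k v + u • trunc (k + 1) v)
        (stickCore t) (stickCore t) :=
      fun v hv => core_mono hv (mem_stickCore_iff.mpr ⟨k, u, hu, rfl⟩)
    simpa [stickPath] using map_mem_closure hF hy hmaps
  have h : stickPath y ⊆ stickPath t := closure_minimal key isClosed_closure
  exact ⟨h, fun x hx => h hx⟩
end
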